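/- For every r ∈ ℂ, the Casimir operator of osp(1|2) acts as zero on U_0^{osp}(r); that is, as endomorphisms of U_0^{osp}(r) one has E∘F + F∘E + (1/2)·H∘H + (1/2)·(Y∘X − X∘Y) = 0. -/

import Mathlib

/-!
The `osp(1|2)`-module `U_0^{osp}(r)`: underlying space `(ℤ ⊕ ℤ) →₀ ℂ`, where
`Sum.inl i` encodes the basis vector `E_i` and `Sum.inr i` encodes the basis
vector `E_{i−1/2}`.
-/

/-- `E·E_i = E_{i−1}`, `E·E_{i−1/2} = E_{i−3/2}`. -/
noncomputable def Eosp : Module.End ℂ ((ℤ ⊕ ℤ) →₀ ℂ) :=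
  Finsupp.lift ((ℤ ⊕ ℤ) →₀ ℂ) ℂ (ℤ ⊕ ℤ)
    (Sum.elim (fun i => Finsupp.single (Sum.inl (i - 1)) 1)
              (fun i => Finsupp.single (Sum.inr (i - 1)) 1))

/-- `H·E_i = −(2i+2r+1)·E_i`, `H·E_{i−1/2} = −(2i+2r)·E_{i−1/2}`. -/
noncomputable def Hosp (r : ℂ) : Module.End ℂ ((ℤ ⊕ ℤ) →₀ ℂ) :=
  Finsupp.lift ((ℤ ⊕ ℤ) →₀ ℂ) ℂ (ℤ ⊕ ℤ)
    (Sum.elim (fun i => (-(2 * (i : ℂ) + 2 * r + 1)) • Finsupp.single (Sum.inl i) 1)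
              (fun i => (-(2 * (i : ℂ) + 2 * r)) • Finsupp.single (Sum.inr i) 1))

/-- `F·E_i = −(r+i+1)²·E_{i+1}`, `F·E_{i−1/2} = −(r+i+1)(r+i)·E_{i+1/2}`. -/
noncomputable def Fosp (r : ℂ) : Module.End ℂ ((ℤ ⊕ ℤ) →₀ ℂ) :=
  Finsupp.lift ((ℤ ⊕ ℤ) →₀ ℂ) ℂ (ℤ ⊕ ℤ)
    (Sum.elim
      (fun i => (-((r + (i : ℂ) + 1) ^ 2)) • Finsupp.single (Sum.inl (i + 1)) 1)
      (fun i => (-((r + (i : ℂ) + 1) * (r + (i : ℂ)))) • Finsupp.single (Sum.inr (i + 1)) 1))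

/-- `X·E_i = E_{i−1/2}`, `X·E_{i−1/2} = E_{i−1}`. -/
noncomputable def Xosp : Module.End ℂ ((ℤ ⊕ ℤ) →₀ ℂ) :=
  Finsupp.lift ((ℤ ⊕ ℤ) →₀ ℂ) ℂ (ℤ ⊕ ℤ)
    (Sum.elim (fun i => Finsupp.single (Sum.inr i) 1)
              (fun i => Finsupp.single (Sum.inl (i - 1)) 1))

/-- `Y·E_i = −(r+i+1)·E_{i+1/2}`, `Y·E_{i−1/2} = −(r+i)·E_i`. -/
noncomputable def Yosp (r : ℂ) : Module.End ℂ ((ℤ ⊕ ℤ) →₀ ℂ) :=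
  Finsupp.lift ((ℤ ⊕ ℤ) →₀ ℂ) ℂ (ℤ ⊕ ℤ)
    (Sum.elim (fun i => (-(r + (i : ℂ) + 1)) • Finsupp.single (Sum.inr (i + 1)) 1)
              (fun i => (-(r + (i : ℂ))) • Finsupp.single (Sum.inl i) 1))

/-!
Each of `E, F, H, X, Y` is a weighted shift of the basis, and every summand of the Casimir
element returns a basis vector to a multiple of itself; the total coefficient on `E_i`
(resp. `E_{i−1/2}`) is a polynomial in `r` and `i` that vanishes identically.
-/

section BasisAction

variable (r : ℂ) (i : ℤ) (c : ℂ)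

lemma Eosp_single_inl :
    Eosp (Finsupp.single (Sum.inl i) c) = Finsupp.single (Sum.inl (i - 1)) c := by
  simp only [Eosp, Finsupp.lift_apply, Finsupp.sum_single_index, Sum.elim_inl, zero_smul,
    Finsupp.smul_single_one]

lemma Eosp_single_inr :
    Eosp (Finsupp.single (Sum.inr i) c) = Finsupp.single (Sum.inr (i - 1)) c := by
  simp only [Eosp, Finsupp.lift_apply, Finsupp.sum_single_index, Sum.elim_inr, zero_smul,
    Finsupp.smul_single_one]

lemma Hosp_single_inl :
    Hosp r (Finsupp.single (Sum.inl i) c) =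
      Finsupp.single (Sum.inl i) (-(2 * i + 2 * r + 1) * c) := by
  simp only [Hosp, Finsupp.lift_apply, Finsupp.sum_single_index, Sum.elim_inl, zero_smul,
    Finsupp.smul_single, smul_eq_mul, mul_one, mul_comm c]

lemma Hosp_single_inr :
    Hosp r (Finsupp.single (Sum.inr i) c) = Finsupp.single (Sum.inr i) (-(2 * i + 2 * r) * c) := by
  simp only [Hosp, Finsupp.lift_apply, Finsupp.sum_single_index, Sum.elim_inr, zero_smul,
    Finsupp.smul_single, smul_eq_mul, mul_one, mul_comm c]

lemma Fosp_single_inl :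
    Fosp r (Finsupp.single (Sum.inl i) c) =
      Finsupp.single (Sum.inl (i + 1)) (-(r + i + 1) ^ 2 * c) := by
  simp only [Fosp, Finsupp.lift_apply, Finsupp.sum_single_index, Sum.elim_inl, zero_smul,
    Finsupp.smul_single, smul_eq_mul, mul_one, mul_comm c]

lemma Fosp_single_inr :
    Fosp r (Finsupp.single (Sum.inr i) c) =
      Finsupp.single (Sum.inr (i + 1)) (-((r + i + 1) * (r + i)) * c) := by
  simp only [Fosp, Finsupp.lift_apply, Finsupp.sum_single_index, Sum.elim_inr, zero_smul,
    Finsupp.smul_single, smul_eq_mul, mul_one, mul_comm c]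

lemma Xosp_single_inl : Xosp (Finsupp.single (Sum.inl i) c) = Finsupp.single (Sum.inr i) c := by
  simp only [Xosp, Finsupp.lift_apply, Finsupp.sum_single_index, Sum.elim_inl, zero_smul,
    Finsupp.smul_single_one]

lemma Xosp_single_inr :
    Xosp (Finsupp.single (Sum.inr i) c) = Finsupp.single (Sum.inl (i - 1)) c := by
  simp only [Xosp, Finsupp.lift_apply, Finsupp.sum_single_index, Sum.elim_inr, zero_smul,
    Finsupp.smul_single_one]

lemma Yosp_single_inl :
    Yosp r (Finsupp.single (Sum.inl i) c) =
      Finsupp.single (Sum.inr (i + 1)) (-(r + i + 1) * c) := by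
  simp only [Yosp, Finsupp.lift_apply, Finsupp.sum_single_index, Sum.elim_inl, zero_smul,
    Finsupp.smul_single, smul_eq_mul, mul_one, mul_comm c]

lemma Yosp_single_inr :
    Yosp r (Finsupp.single (Sum.inr i) c) = Finsupp.single (Sum.inl i) (-(r + i) * c) := by
  simp only [Yosp, Finsupp.lift_apply, Finsupp.sum_single_index, Sum.elim_inr, zero_smul,
    Finsupp.smul_single, smul_eq_mul, mul_one, mul_comm c]

end BasisAction

noncomputable def casimirOsp (r : ℂ) : Module.End ℂ ((ℤ ⊕ ℤ) →₀ ℂ) :=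
  Eosp * Fosp r + Fosp r * Eosp + (1/2 : ℂ) • (Hosp r * Hosp r)
    + (1/2 : ℂ) • (Yosp r * Xosp - Xosp * Yosp r)

lemma casimirOsp_apply (r : ℂ) (v : (ℤ ⊕ ℤ) →₀ ℂ) :
    casimirOsp r v = Eosp (Fosp r v) + Fosp r (Eosp v) + (1/2 : ℂ) • Hosp r (Hosp r v)
      + (1/2 : ℂ) • (Yosp r (Xosp v) - Xosp (Yosp r v)) :=
  rfl

lemma casimirOsp_single_inl (r : ℂ) (i : ℤ) (c : ℂ) :
    casimirOsp r (Finsupp.single (Sum.inl i) c) = 0 := by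
  simp only [casimirOsp_apply, Eosp_single_inl, Fosp_single_inl, Hosp_single_inl, Xosp_single_inl,
    Yosp_single_inl, Xosp_single_inr, Yosp_single_inr, sub_add_cancel, add_sub_cancel_right,
    Finsupp.smul_single, ← Finsupp.single_add, ← Finsupp.single_sub, Finsupp.single_eq_zero]
  push_cast
  ring

lemma casimirOsp_single_inr (r : ℂ) (i : ℤ) (c : ℂ) :
    casimirOsp r (Finsupp.single (Sum.inr i) c) = 0 := by
  simp only [casimirOsp_apply, Eosp_single_inr, Fosp_single_inr, Hosp_single_inr, Xosp_single_inl,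
    Yosp_single_inl, Xosp_single_inr, Yosp_single_inr, sub_add_cancel, add_sub_cancel_right,
    Finsupp.smul_single, ← Finsupp.single_add, ← Finsupp.single_sub, Finsupp.single_eq_zero]
  push_cast
  ring

/-- The Casimir operator `E∘F + F∘E + (1/2)·H∘H + (1/2)·(Y∘X − X∘Y)` of `osp(1|2)`
acts as zero on `U_0^{osp}(r)`. -/
theorem casimir_zero_on_U0osp (r : ℂ) :
    Eosp * Fosp r + Fosp r * Eosp + (1/2 : ℂ) • (Hosp r * Hosp r)
      + (1/2 : ℂ) • (Yosp r * Xosp - Xosp * Yosp r) = 0 := by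
  show casimirOsp r = 0
  ext (i | i) : 2
  · exact casimirOsp_single_inl r i 1
  · exact casimirOsp_single_inr r i 1
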